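/- arXiv:1806.03180 — 2 statements merged into one kernel-verified Lean document; each statement's English description precedes it below -/
import Mathlib

section
/- Let k be a number field, n ≥ 1 an integer, and F ∈ k[x₀,…,x_n] a nonzero homogeneous polynomial of degree e ≥ 1. For each place v of k let n_v be a non-negative real number, with n_v = 0 for all but finitely many places v. Then the set of points Q ∈ ℙⁿ(k) with F(Q) ≠ 0 (for some, equivalently any, choice of homogeneous coordinates) such that log(‖Q‖_v^e / |F(Q)|_v) ≤ n_v for every place v of k (where the quantity is computed from one fixed choice of homogeneous coordinates of Q, being independent of that choice) is finite. (This is the instance of the theorem that a very ample divisor admits no infinite everywhere-integral set, for X = ℙⁿ and D the hypersurface F = 0.) -/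
open NumberField IsDedekindDomain

/-- The finite places of a number field `K`: the nonzero prime ideals of its ring of
integers. -/
abbrev FinPlace (K : Type) [Field K] [NumberField K] := HeightOneSpectrum (𝓞 K)

/-- The places of a number field `K`: either a finite place or an infinite place (the
latter arising from an embedding of `K` into `ℂ`). -/
abbrev Place (K : Type) [Field K] [NumberField K] :=
  FinPlace K ⊕ NumberField.InfinitePlace K

/-- The normalized `v`-adic absolute value attached to a finite place `v` of `K`:
`|x|_v = (N 𝔭)^(-ord_v x)` where `N 𝔭` is the absolute norm of the prime ideal. -/
noncomputable def finAbs {K : Type} [Field K] [NumberField K] (v : FinPlace K) (x : K) : ℝ :=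
  (WithZeroMulInt.toNNReal (e := (Ideal.absNorm v.asIdeal : NNReal))
    (by
      refine Nat.cast_ne_zero (R := NNReal) |>.mpr ?_
      simpa [Ideal.absNorm_eq_zero_iff] using v.ne_bot)
    (v.valuation K x) : ℝ)

/-- The absolute value `|·|_v` attached to a place `v` of `K`: the normalized `𝔭`-adic
absolute value at a finite place, and the absolute value induced by the corresponding
embedding at an infinite place. -/
noncomputable def placeAbs {K : Type} [Field K] [NumberField K] : Place K → K → ℝ
  | .inl v => finAbs v
  | .inr w => fun x => w x


/-! Let `q` be homogeneous coordinates of a point `Q` in the set and put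
`r_ij = q_i q_j^(e-1) / F(q)`. The bound `‖q‖_v^e ≤ exp (c_v) |F(q)|_v` gives `|r_ij|_v ≤ exp c_v`
at every place. A fixed nonzero algebraic integer `d` with `|d|_v ≤ exp (-c_v)` at the finitely
many finite places where `c_v ≠ 0` makes all `d r_ij` algebraic integers with bounded conjugates,
so they range over a finite set; and the ratios `r_ij` determine `Q`, because
`r_ij / r_jj = q_i / q_j`. -/

open Real

theorem Set.Finite.image_of_factors {α β γ : Type*} {s : Set α}
    {g : α → β} {φ : α → γ} (hφ : (φ '' s).Finite)
    (h : ∀ a ∈ s, ∀ b ∈ s, φ a = φ b → g a = g b) : (g '' s).Finite := by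
  refine (hφ.biUnion fun z _ => Set.Subsingleton.finite (s := g '' (s ∩ φ ⁻¹' {z})) ?_).subset ?_
  · rintro _ ⟨a, ⟨ha, rfl⟩, rfl⟩ _ ⟨b, ⟨hb, hab⟩, rfl⟩
    exact h a ha b hb hab.symm
  · rintro _ ⟨a, ha, rfl⟩
    exact Set.mem_biUnion (Set.mem_image_of_mem φ ha) ⟨a, ⟨ha, rfl⟩, rfl⟩

noncomputable def monomialRatio {ι K : Type*} [Field K] (F : MvPolynomial ι K) (f : ℕ) (q : ι → K)
    (p : ι × ι) : K :=
  q p.1 * q p.2 ^ f / MvPolynomial.eval q F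

theorem AbsoluteValue.mul_monomialRatio_le {ι K : Type*} [Finite ι] [Field K]
    (abv : AbsoluteValue K ℝ) {F : MvPolynomial ι K} {f : ℕ} {q : ι → K} {c : ℝ}
    (h : log ((⨆ i, abv (q i)) ^ (f + 1) / abv (MvPolynomial.eval q F)) ≤ c) (d : K)
    (p : ι × ι) : abv (d * monomialRatio F f q p) ≤ abv d * exp c := by
  rw [monomialRatio]
  set x := MvPolynomial.eval q F
  rcases eq_or_ne x 0 with hx | hx
  · rw [hx, div_zero, mul_zero, map_zero]
    positivity
  set s := ⨆ i, abv (q i)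
  have hs : ∀ i, abv (q i) ≤ s := le_ciSup (Set.finite_range _).bddAbove
  have hs0 : 0 ≤ s := (abv.nonneg _).trans (hs p.1)
  have hx : 0 < abv x := abv.pos hx
  have hsx : s ^ (f + 1) ≤ exp c * abv x := by
    rcases (pow_nonneg hs0 (f + 1)).eq_or_lt with h0 | h0
    · rw [← h0]; positivity
    · rwa [log_le_iff_le_exp (div_pos h0 hx), div_le_iff₀ hx] at h
  calc abv (d * (q p.1 * q p.2 ^ f / x))
      = abv d * (abv (q p.1) * abv (q p.2) ^ f / abv x) := by
        simp only [map_mul, map_div₀, map_pow]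
    _ ≤ abv d * (s ^ (f + 1) / abv x) := by
        rw [pow_succ']
        gcongr
        exacts [hs p.1, hs p.2]
    _ ≤ abv d * exp c := by
        gcongr
        rwa [div_le_iff₀ hx]

section NumberField

open NumberField.HeightOneSpectrum (one_lt_absNorm_nnreal)

variable {K : Type} [Field K] [NumberField K]

noncomputable def placeAbv : Place K → AbsoluteValue K ℝ
  | .inl v => HeightOneSpectrum.adicAbv K v
  | .inr w => w.1

theorem placeAbs_eq_placeAbv (v : Place K) : placeAbs v = placeAbv v := by
  cases v <;> rfl

theorem exists_ne_zero_forall_adicAbv_le (t : Finset (FinPlace K)) (ε : FinPlace K → ℝ)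
    (hε : ∀ v ∈ t, 0 < ε v) :
    ∃ d : 𝓞 K, d ≠ 0 ∧ ∀ v ∈ t, HeightOneSpectrum.adicAbv K v d ≤ ε v := by
  classical
  induction t using Finset.induction_on with
  | empty => exact ⟨1, one_ne_zero, by simp⟩
  | insert v t _ ih =>
    obtain ⟨d, hd0, hd⟩ := ih fun w hw => hε w (Finset.mem_insert_of_mem hw)
    obtain ⟨a, hav, ha0⟩ := Submodule.exists_mem_ne_zero_of_ne_bot v.ne_bot
    have ha : HeightOneSpectrum.adicAbv K v a < 1 :=
      (v.adicAbv_coe_lt_one_iff (one_lt_absNorm_nnreal v) a).mpr hav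
    obtain ⟨N, hN⟩ := exists_pow_lt_of_lt_one (hε v (Finset.mem_insert_self v t)) ha
    refine ⟨d * a ^ N, mul_ne_zero hd0 (pow_ne_zero N ha0), fun w hw => ?_⟩
    have hle (r : 𝓞 K) : HeightOneSpectrum.adicAbv K w r ≤ 1 :=
      w.adicAbv_coe_le_one (one_lt_absNorm_nnreal w) r
    have hnonneg (r : 𝓞 K) : 0 ≤ HeightOneSpectrum.adicAbv K w r := AbsoluteValue.nonneg _ _
    push_cast
    rw [map_mul, map_pow]
    rcases Finset.mem_insert.mp hw with rfl | hw
    · exact (mul_le_of_le_one_left (pow_nonneg (hnonneg a) N) (hle d)).trans hN.le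
    · exact (mul_le_of_le_one_right (hnonneg d) (pow_le_one₀ (hnonneg a) (hle a))).trans (hd w hw)

theorem exists_ne_zero_forall_adicAbv_mul_exp_le_one (c : FinPlace K → ℝ)
    (hc : {v | c v ≠ 0}.Finite) :
    ∃ d : K, d ≠ 0 ∧ ∀ v, HeightOneSpectrum.adicAbv K v d * exp (c v) ≤ 1 := by
  obtain ⟨d, hd0, hd⟩ :=
    exists_ne_zero_forall_adicAbv_le hc.toFinset (fun v => exp (-c v)) fun _ _ => exp_pos _
  refine ⟨d, (map_ne_zero_iff _ (IsFractionRing.injective (𝓞 K) K)).mpr hd0, fun v => ?_⟩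
  by_cases hv : c v = 0
  · rw [hv, exp_zero, mul_one]
    exact v.adicAbv_coe_le_one (one_lt_absNorm_nnreal v) d
  · calc HeightOneSpectrum.adicAbv K v d * exp (c v) ≤ exp (-c v) * exp (c v) := by
          gcongr
          exact hd v (hc.mem_toFinset.mpr hv)
      _ = 1 := by rw [← exp_add, neg_add_cancel, exp_zero]

theorem finite_setOf_forall_placeAbv_le (B : Place K → ℝ) (hB : ∀ v, B (.inl v) ≤ 1) :
    {x : K | ∀ v, placeAbv v x ≤ B v}.Finite := by
  obtain ⟨M, hM⟩ := (Set.finite_range fun w : InfinitePlace K => B (.inr w)).bddAbove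
  refine (Embeddings.finite_of_norm_le K ℂ M).subset fun x hx => ⟨?_, fun φ => ?_⟩
  · obtain ⟨y, rfl⟩ := HeightOneSpectrum.mem_integers_of_valuation_le_one (R := 𝓞 K) K x fun v =>
      (WithZeroMulInt.toNNReal_le_one_iff (one_lt_absNorm_nnreal v)).mp
        (by exact_mod_cast (hx (.inl v)).trans (hB v))
    exact y.isIntegral_coe
  · exact (hx (.inr (InfinitePlace.mk φ))).trans (hM ⟨_, rfl⟩)

end NumberField

theorem mk_eq_mk_of_monomialRatio_eq {ι K : Type*} [Field K] {F : MvPolynomial ι K} {f : ℕ}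
    {q q' : ι → K} (hq : q ≠ 0) (hq' : q' ≠ 0) (hFq : MvPolynomial.eval q F ≠ 0)
    (hFq' : MvPolynomial.eval q' F ≠ 0) (h : monomialRatio F f q = monomialRatio F f q') :
    Projectivization.mk K q hq = Projectivization.mk K q' hq' := by
  obtain ⟨j, hj⟩ : ∃ j, q j ≠ 0 := Function.ne_iff.mp hq
  have hr (i : ι) := congrFun h (i, j)
  simp only [monomialRatio] at hr
  have hj' : q' j ≠ 0 := by
    rintro hj'
    simpa [hj', hj, hFq] using hr j
  have hA' : q' j ^ f * MvPolynomial.eval q F ≠ 0 := mul_ne_zero (pow_ne_zero f hj') hFq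
  rw [Projectivization.mk_eq_mk_iff']
  refine ⟨q j / q' j, funext fun i => ?_⟩
  have ei := (div_eq_div_iff hFq hFq').mp (hr i)
  have ej := (div_eq_div_iff hFq hFq').mp (hr j)
  rw [Pi.smul_apply, smul_eq_mul, div_mul_eq_mul_div, div_eq_iff hj']
  exact mul_right_cancel₀ hA' (by linear_combination q i * ej - q j * ei)

theorem finite_everywhere_integral_points_hypersurface_complement_general
    (K : Type) [Field K] [NumberField K] (n : ℕ)
    (F : MvPolynomial (Fin (n + 1)) K)
    (e : ℕ) (he : 1 ≤ e)
    (c : Place K → ℝ) (hcfin : {v : Place K | c v ≠ 0}.Finite) :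
    {Q : Projectivization K (Fin (n + 1) → K) |
      ∃ (q : Fin (n + 1) → K) (hq : q ≠ 0), Projectivization.mk K q hq = Q ∧
        MvPolynomial.eval q F ≠ 0 ∧
        ∀ v : Place K,
          Real.log ((⨆ i, placeAbs v (q i)) ^ e / placeAbs v (MvPolynomial.eval q F)) ≤
            c v}.Finite := by
  obtain ⟨f, rfl⟩ : ∃ f, e = f + 1 := ⟨e - 1, by omega⟩
  obtain ⟨d, hd0, hd⟩ := exists_ne_zero_forall_adicAbv_mul_exp_le_one (c ∘ .inl)
    (hcfin.preimage Sum.inl_injective.injOn)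
  simp only [placeAbs_eq_placeAbv]
  set s : Set {q : Fin (n + 1) → K // q ≠ 0} := {q | MvPolynomial.eval q.1 F ≠ 0 ∧
    ∀ v, log ((⨆ i, placeAbv v (q.1 i)) ^ (f + 1) / placeAbv v (MvPolynomial.eval q.1 F)) ≤ c v}
  have hfin : ((fun q p => d * monomialRatio F f q.1 p) '' s).Finite := by
    refine (Set.Finite.pi fun _ =>
      finite_setOf_forall_placeAbv_le (fun v => placeAbv v d * exp (c v)) hd).subset ?_
    rintro _ ⟨q, ⟨-, hq⟩, rfl⟩ p - v
    exact (placeAbv v).mul_monomialRatio_le (hq v) d p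
  refine (hfin.image_of_factors (g := Projectivization.mk' K) ?_).subset ?_
  · rintro q ⟨hFq, -⟩ q' ⟨hFq', -⟩ h
    exact mk_eq_mk_of_monomialRatio_eq q.2 q'.2 hFq hFq' (funext fun p =>
      mul_left_cancel₀ hd0 (congrFun h p))
  · rintro _ ⟨q, hq, rfl, hFq, hqc⟩
    exact ⟨⟨q, hq⟩, ⟨hFq, hqc⟩, rfl⟩

/-- Let `k` be a number field, `n ≥ 1`, and `F ∈ k[x₀,…,x_n]` a nonzero
homogeneous polynomial of degree `e ≥ 1`. For each place `v` of `k` let `n_v ≥ 0`, with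
`n_v = 0` for all but finitely many places. Then the set of points `Q ∈ ℙⁿ(k)` with
`F(Q) ≠ 0` such that `log (‖Q‖_v^e / |F(Q)|_v) ≤ n_v` for every place `v` (computed from
one choice of homogeneous coordinates of `Q`, being independent of that choice) is
finite. -/
theorem finite_everywhere_integral_points_hypersurface_complement
    (K : Type) [Field K] [NumberField K] (n : ℕ) (hn : 1 ≤ n)
    (F : MvPolynomial (Fin (n + 1)) K) (hF : F ≠ 0)
    (e : ℕ) (he : 1 ≤ e) (hFhom : F.IsHomogeneous e)
    (c : Place K → ℝ) (hc0 : ∀ v, 0 ≤ c v) (hcfin : {v : Place K | c v ≠ 0}.Finite) :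
    {Q : Projectivization K (Fin (n + 1) → K) |
      ∃ (q : Fin (n + 1) → K) (hq : q ≠ 0), Projectivization.mk K q hq = Q ∧
        MvPolynomial.eval q F ≠ 0 ∧
        ∀ v : Place K,
          Real.log ((⨆ i, placeAbs v (q i)) ^ e / placeAbs v (MvPolynomial.eval q F)) ≤
            c v}.Finite :=
  finite_everywhere_integral_points_hypersurface_complement_general K n F e he c hcfin
end

section
/- Let k be a number field, n ≥ 2 an integer, N a finite set of k-rational points of ℙⁿ, and S a finite set of places of k containing all the infinite places. Then there exist non-negative real numbers n_v, one for each place v of k not in S, with n_v = 0 for all but finitely many such places, such that the following set is Zariski dense in ℙⁿ: the set of points Q = [1 : a₁ : … : a_n] ∈ ℙⁿ(k) with Q ∉ N satisfying, for every place v ∉ S: max(1, |a₁|_v, …, |a_n|_v) ≤ exp(n_v) and λ_{d,v}(Q) ≤ n_v for every d ∈ N. (This is the instance X = ℙⁿ, with D the union of the hyperplane {x₀ = 0} and the finite set N, of the theorem on Zariski density of (D,S)-integral points on varieties whose generic linear section is a rational curve, when the codimension-one part of D has degree one; since N consists of k-rational points no finite extension of k is needed.) -/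
open NumberField IsDedekindDomain

/-- `‖q‖_v = max (|q₀|_v, …, |q_n|_v)`: the `v`-adic sup norm of a coordinate vector. -/
noncomputable def projNorm {K : Type} [Field K] [NumberField K] {n : ℕ} (v : Place K)
    (q : Fin (n + 1) → K) : ℝ :=
  ⨆ i, placeAbs v (q i)

/-- `δ_v(d, q) = max_{0 ≤ i < j ≤ n} |dᵢ qⱼ − dⱼ qᵢ|_v`, written as the maximum over all
pairs `(i, j)`, which agrees with the maximum over `i < j` since the quantity is symmetric
under swapping `i` and `j` and vanishes (hence does not contribute) for `i = j`. -/
noncomputable def projDelta {K : Type} [Field K] [NumberField K] {n : ℕ} (v : Place K)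
    (d q : Fin (n + 1) → K) : ℝ :=
  ⨆ p : Fin (n + 1) × Fin (n + 1), placeAbs v (d p.1 * q p.2 - d p.2 * q p.1)

/-- The standard Weil function `λ_{d,v}(Q) = log (‖d‖_v · ‖Q‖_v / δ_v(d, Q))` of the point
`d` at the place `v`, computed using the canonical representatives (mathematically it is
independent of the choice of homogeneous coordinates). -/
noncomputable def weil {K : Type} [Field K] [NumberField K] {n : ℕ} (v : Place K)
    (d Q : Projectivization K (Fin (n + 1) → K)) : ℝ :=
  Real.log (projNorm v d.rep * projNorm v Q.rep / projDelta v d.rep Q.rep)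

/-!
Clear denominators, so that every `d ∈ N` has a representative `w_d` with integral coordinates.
Fix two affine coordinates `i ≠ j` and take the points `[1 : A]` where `A = σ` is integral except
for `A_j = σ_j G(σ_i) + γ`, with `G = ∏ (w_{d,0} X - w_{d,i})` over the `d` off the hyperplane
`x₀ = 0`. Every `w_{d,0} A_i - w_{d,i}` then divides `A_j - γ`, so the ideal generated by the
`2 × 2` minors of `(w_d, (1, A))` contains the nonzero integer `w_{d,0} γ - w_{d,j}`, chosen
independently of `σ` (for `w_{d,0} = 0` it contains a nonzero coordinate of `w_d`). The product
`ρ` of these integers satisfies `|ρ|_v ≤ δ_v(w_d, (1, A))` at every finite place, which bounds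
`λ_{d,v}` by `-log |ρ|_v`, a quantity vanishing for all but finitely many `v`. Finally
`σ ↦ A` is birational, so these points, even with integral `σ`, are Zariski dense.
-/

open scoped Polynomial

section CrossIdeal

variable {R : Type*} [CommRing R]

def crossIdeal {ι : Type*} (x y : ι → R) : Ideal R :=
  Ideal.span (Set.range fun p : ι × ι => x p.1 * y p.2 - x p.2 * y p.1)

lemma sub_mem_crossIdeal {ι : Type*} (x y : ι → R) (k l : ι) :
    x k * y l - x l * y k ∈ crossIdeal x y :=
  Ideal.subset_span ⟨(k, l), rfl⟩

lemma crossIdeal_eq_bot_of_mk_eq_mk {K : Type*} [Field K] [Algebra R K] [FaithfulSMul R K]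
    {ι : Type*} {x y : ι → R} (hx : algebraMap R K ∘ x ≠ 0) (hy : algebraMap R K ∘ y ≠ 0)
    (h : Projectivization.mk K _ hx = Projectivization.mk K _ hy) : crossIdeal x y = ⊥ := by
  obtain ⟨a, ha⟩ := (Projectivization.mk_eq_mk_iff K _ _ hx hy).mp h
  refine Ideal.span_eq_bot.mpr ?_
  rintro _ ⟨⟨k, l⟩, rfl⟩
  apply FaithfulSMul.algebraMap_injective R K
  have hk := congrFun ha k
  have hl := congrFun ha l
  simp only [Function.comp_apply, Pi.smul_apply, Units.smul_def, smul_eq_mul] at hk hl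
  simp only [map_sub, map_mul, map_zero, ← hk, ← hl]
  ring

variable {n : ℕ} (w : Fin (n + 1) → R) (A : Fin n → R)

lemma sub_mem_crossIdeal_cons (k : Fin n) :
    w 0 * A k - w k.succ ∈ crossIdeal w (Fin.cons 1 A) := by
  simpa using sub_mem_crossIdeal w (Fin.cons 1 A) 0 k.succ

lemma mem_crossIdeal_cons_of_dvd {i j : Fin n} {γ : R} (h : w 0 * A i - w i.succ ∣ A j - γ) :
    w 0 * γ - w j.succ ∈ crossIdeal w (Fin.cons 1 A) := by
  obtain ⟨t, ht⟩ := h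
  have : w 0 * γ - w j.succ = (w 0 * A j - w j.succ) - w 0 * t * (w 0 * A i - w i.succ) := by
    linear_combination (-w 0) * ht
  rw [this]
  exact sub_mem (sub_mem_crossIdeal_cons w A j)
    (Ideal.mul_mem_left _ _ (sub_mem_crossIdeal_cons w A i))

lemma mem_crossIdeal_cons_of_eq_zero (h : w 0 = 0) (k : Fin n) :
    w k.succ ∈ crossIdeal w (Fin.cons 1 A) := by
  simpa [h] using sub_mem_crossIdeal_cons w A k

end CrossIdeal

section Shear

variable {R : Type*} [CommRing R] {ι : Type*} [DecidableEq ι]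

def shear (G : R[X]) (γ : R) (i j : ι) (σ : ι → R) : ι → R :=
  Function.update σ j (σ j * G.eval (σ i) + γ)

variable {G : R[X]} {γ : R} {i j : ι} {σ : ι → R}

lemma shear_apply_of_ne (hij : i ≠ j) : shear G γ i j σ i = σ i :=
  Function.update_of_ne hij _ _

lemma shear_apply_self : shear G γ i j σ j = σ j * G.eval (σ i) + γ :=
  Function.update_self _ _ _

lemma comp_shear {S : Type*} [CommRing S] (φ : R →+* S) :
    φ ∘ shear G γ i j σ = shear (G.map φ) (φ γ) i j (φ ∘ σ) := by
  simp [shear, Function.comp_update, Polynomial.eval_map, Polynomial.eval₂_at_apply]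

end Shear

namespace MvPolynomial

lemma IsHomogeneous.eval_smul {R : Type*} [CommRing R] {σ : Type*} {f : MvPolynomial σ R}
    {e : ℕ} (hf : f.IsHomogeneous e) (c : R) (x : σ → R) :
    eval (c • x) f = c ^ e * eval x f := by
  classical
  rw [eval_eq, eval_eq, Finset.mul_sum]
  refine Finset.sum_congr rfl fun d hd => ?_
  have hdeg : ∑ k ∈ d.support, d k = e := by
    rw [← Finsupp.degree_apply, Finsupp.degree_eq_weight_one]
    exact hf (mem_support_iff.mp hd)
  simp only [Pi.smul_apply, smul_eq_mul, mul_pow, Finset.prod_mul_distrib,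
    Finset.prod_pow_eq_pow_sum, hdeg]
  ring

lemma eval_bind₁ {R : Type*} [CommRing R] {σ τ : Type*} (x : τ → R) (Φ : σ → MvPolynomial τ R)
    (P : MvPolynomial σ R) : eval x (bind₁ Φ P) = eval (fun k => eval x (Φ k)) P :=
  eval₂Hom_bind₁ (RingHom.id R) x Φ P

variable {K : Type*} [Field K]

lemma IsHomogeneous.eq_zero_of_eval_cons_one [Infinite K] {n e : ℕ}
    {f : MvPolynomial (Fin (n + 1)) K} (hf : f.IsHomogeneous e)
    (h : ∀ y, eval (Fin.cons 1 y) f = 0) : f = 0 := by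
  refine funext_set (fun _ => {0}ᶜ) (fun _ => (Set.finite_singleton 0).infinite_compl)
    fun z hz => ?_
  have hz0 : z 0 ≠ 0 := hz 0 trivial
  have hz : z = z 0 • Fin.cons 1 fun k => z k.succ / z 0 := by
    funext k
    cases k using Fin.cases <;> simp [mul_div_cancel₀ _ hz0]
  rw [hz, hf.eval_smul, h, mul_zero, map_zero]

lemma eq_zero_of_eval_shear [Infinite K] {ι : Type*} [DecidableEq ι] (P : MvPolynomial ι K)
    {G : K[X]} (hG : G ≠ 0) {i j : ι} (hij : i ≠ j) (γ : K) (h : ∀ x, eval (shear G γ i j x) P = 0) :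
    P = 0 := by
  refine funext_set (fun _ => {t | ¬ G.IsRoot t})
    (fun _ => (Polynomial.finite_setOfPred_isRoot hG).infinite_compl) fun y hy => ?_
  have hGy : G.eval (y i) ≠ 0 := hy i trivial
  have hy : shear G γ i j (Function.update y j ((y j - γ) / G.eval (y i))) = y := by
    ext k
    rcases eq_or_ne k j with rfl | hk
    · simp [shear, hij, div_mul_cancel₀ _ hGy]
    · simp [shear, hk]
  rw [← hy, h, map_zero]

theorem exists_eval_cons_shear_ne_zero {n e : ℕ} {f : MvPolynomial (Fin (n + 1)) K}
    (hf : f.IsHomogeneous e) (hf0 : f ≠ 0) {G : K[X]} (hG : G ≠ 0) {i j : Fin n} (hij : i ≠ j)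
    (γ : K) {s : Set K} (hs : s.Infinite) :
    ∃ x : Fin n → K, (∀ k, x k ∈ s) ∧ eval (Fin.cons 1 (shear G γ i j x)) f ≠ 0 := by
  have : Infinite K := Set.infinite_univ_iff.mp (hs.mono (Set.subset_univ s))
  set P := bind₁ (Fin.cons 1 X) f
  set F := bind₁ (shear (G.map C) (C γ) i j X) P
  have hP : ∀ y, eval y P = eval (Fin.cons 1 y) f := fun y => by
    rw [eval_bind₁]
    refine congrArg (eval · f) (_root_.funext fun k => ?_)
    cases k using Fin.cases <;> simp
  have hF : ∀ x, eval x F = eval (shear G γ i j x) P := fun x => by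
    rw [eval_bind₁]
    have hC : (eval x).comp C = RingHom.id K := eval₂Hom_comp_C _ _
    have := comp_shear (G := G.map C) (γ := C γ) (i := i) (j := j) (σ := X) (eval x)
    rw [Polynomial.map_map, hC, Polynomial.map_id, eval_C,
      show ⇑(eval x) ∘ X = x from _root_.funext fun _ => eval_X _] at this
    exact congrArg (eval · P) this
  have hP0 : P ≠ 0 := fun h => hf0 (hf.eq_zero_of_eval_cons_one fun y => by rw [← hP, h, map_zero])
  have hF0 : F ≠ 0 := fun h =>
    hP0 (eq_zero_of_eval_shear P hG hij γ fun x => by rw [← hF, h, map_zero])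
  by_contra! hcon
  exact hF0 (funext_set (fun _ => s) (fun _ => hs) fun x hx => by
    rw [hF, hP, hcon x fun k => hx k trivial, map_zero])

end MvPolynomial

theorem exists_eval_cons_algebraMap_shear_ne_zero {R K : Type*} [CommRing R] [Infinite R]
    [Field K] [Algebra R K] [FaithfulSMul R K] {n e : ℕ} {f : MvPolynomial (Fin (n + 1)) K}
    (hf : f.IsHomogeneous e) (hf0 : f ≠ 0) {G : R[X]} (hG : G ≠ 0) {i j : Fin n} (hij : i ≠ j)
    (γ : R) : ∃ σ : Fin n → R,
      MvPolynomial.eval (Fin.cons 1 (algebraMap R K ∘ shear G γ i j σ)) f ≠ 0 := by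
  have hinj := FaithfulSMul.algebraMap_injective R K
  obtain ⟨x, hx, hfx⟩ := MvPolynomial.exists_eval_cons_shear_ne_zero hf hf0
    ((Polynomial.map_ne_zero_iff hinj).mpr hG) hij (algebraMap R K γ)
    (Set.infinite_range_of_injective hinj)
  choose σ hσ using hx
  refine ⟨σ, ?_⟩
  rwa [comp_shear, show algebraMap R K ∘ σ = x from funext hσ]

section Places

variable {K : Type} [Field K] [NumberField K]

lemma finAbs_eq_adicAbv (v : FinPlace K) (x : K) :
    finAbs v x = NumberField.HeightOneSpectrum.adicAbv K v x := rfl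

lemma placeAbs_mul (v : Place K) (x y : K) :
    placeAbs v (x * y) = placeAbs v x * placeAbs v y := by
  rcases v with v | w
  · exact map_mul (NumberField.HeightOneSpectrum.adicAbv K v) x y
  · exact map_mul w x y

lemma placeAbs_nonneg (v : Place K) (x : K) : 0 ≤ placeAbs v x := by
  rcases v with v | w
  · exact (NumberField.HeightOneSpectrum.adicAbv K v).nonneg x
  · exact w.1.nonneg x

lemma placeAbs_pos (v : Place K) {x : K} (hx : x ≠ 0) : 0 < placeAbs v x := by
  rcases v with v | w
  · exact (NumberField.HeightOneSpectrum.adicAbv K v).pos hx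
  · exact w.pos_iff.mpr hx

variable {n : ℕ}

lemma placeAbs_le_projNorm (v : Place K) (q : Fin (n + 1) → K) (k : Fin (n + 1)) :
    placeAbs v (q k) ≤ projNorm v q :=
  le_ciSup (f := fun k => placeAbs v (q k)) (Set.finite_range _).bddAbove k

lemma placeAbs_le_projDelta (v : Place K) (d q : Fin (n + 1) → K) (k l : Fin (n + 1)) :
    placeAbs v (d k * q l - d l * q k) ≤ projDelta v d q :=
  le_ciSup (f := fun p : Fin (n + 1) × Fin (n + 1) => placeAbs v (d p.1 * q p.2 - d p.2 * q p.1))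
    (Set.finite_range _).bddAbove (k, l)

lemma projNorm_pos (v : Place K) {q : Fin (n + 1) → K} (hq : q ≠ 0) : 0 < projNorm v q := by
  obtain ⟨k, hk⟩ := Function.ne_iff.mp hq
  exact (placeAbs_pos v hk).trans_le (placeAbs_le_projNorm v q k)

lemma projNorm_smul (v : Place K) (c : K) (q : Fin (n + 1) → K) :
    projNorm v (c • q) = placeAbs v c * projNorm v q := by
  simp only [projNorm, Pi.smul_apply, smul_eq_mul, placeAbs_mul,
    Real.mul_iSup_of_nonneg (placeAbs_nonneg v c)]

lemma projDelta_smul_left (v : Place K) (c : K) (d q : Fin (n + 1) → K) :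
    projDelta v (c • d) q = placeAbs v c * projDelta v d q := by
  simp only [projDelta, Pi.smul_apply, smul_eq_mul, mul_assoc, ← mul_sub, placeAbs_mul,
    Real.mul_iSup_of_nonneg (placeAbs_nonneg v c)]

lemma projDelta_smul_right (v : Place K) (c : K) (d q : Fin (n + 1) → K) :
    projDelta v d (c • q) = placeAbs v c * projDelta v d q := by
  simp only [projDelta, Pi.smul_apply, smul_eq_mul, mul_left_comm _ c, ← mul_sub, placeAbs_mul,
    Real.mul_iSup_of_nonneg (placeAbs_nonneg v c)]

lemma weil_mk_mk (v : Place K) {x y : Fin (n + 1) → K} (hx : x ≠ 0) (hy : y ≠ 0) :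
    weil v (Projectivization.mk K x hx) (Projectivization.mk K y hy) =
      Real.log (projNorm v x * projNorm v y / projDelta v x y) := by
  obtain ⟨a, ha⟩ := Projectivization.exists_smul_eq_mk_rep K x hx
  obtain ⟨b, hb⟩ := Projectivization.exists_smul_eq_mk_rep K y hy
  have hab : placeAbs v a * placeAbs v b ≠ 0 :=
    (mul_pos (placeAbs_pos v a.ne_zero) (placeAbs_pos v b.ne_zero)).ne'
  simp only [weil, ← ha, ← hb, Units.smul_def, projNorm_smul, projDelta_smul_left,
    projDelta_smul_right]
  rw [← mul_div_mul_left (projNorm v x * projNorm v y) _ hab]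
  congr 1
  ring

end Places

section FinitePlaces

variable {K : Type} [Field K] [NumberField K] (v : FinPlace K)

lemma finAbs_algebraMap_le_one (r : 𝓞 K) : finAbs v (algebraMap (𝓞 K) K r) ≤ 1 :=
  v.adicAbv_coe_le_one (NumberField.HeightOneSpectrum.one_lt_absNorm_nnreal v) r

lemma finite_setOf_finAbs_algebraMap_ne_one {r : 𝓞 K} (hr : r ≠ 0) :
    {v : FinPlace K | finAbs v (algebraMap (𝓞 K) K r) ≠ 1}.Finite := by
  refine (Ideal.finite_factors (I := Ideal.span {r}) (by simpa using hr)).subset fun v hv => ?_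
  rw [Set.mem_ofPred_eq, Ideal.dvd_span_singleton]
  by_contra h
  exact hv ((v.adicAbv_coe_eq_one_iff
    (NumberField.HeightOneSpectrum.one_lt_absNorm_nnreal v) r).mpr h)

variable {n : ℕ}

lemma projNorm_algebraMap_le_one (x : Fin (n + 1) → 𝓞 K) :
    projNorm (.inl v) (algebraMap (𝓞 K) K ∘ x) ≤ 1 :=
  ciSup_le fun k => finAbs_algebraMap_le_one v (x k)

lemma finAbs_le_projDelta_of_mem_crossIdeal {x y : Fin (n + 1) → 𝓞 K} {r : 𝓞 K}
    (hr : r ∈ crossIdeal x y) :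
    finAbs v (algebraMap (𝓞 K) K r) ≤
      projDelta (.inl v) (algebraMap (𝓞 K) K ∘ x) (algebraMap (𝓞 K) K ∘ y) := by
  induction hr using Submodule.span_induction with
  | mem _ h =>
    obtain ⟨⟨k, l⟩, rfl⟩ := h
    rw [map_sub, map_mul, map_mul]
    exact placeAbs_le_projDelta (.inl v) (algebraMap (𝓞 K) K ∘ x) (algebraMap (𝓞 K) K ∘ y) k l
  | zero =>
    rw [finAbs_eq_adicAbv, map_zero, map_zero]
    exact (placeAbs_nonneg _ _).trans
      (placeAbs_le_projDelta (.inl v) (algebraMap (𝓞 K) K ∘ x) (algebraMap (𝓞 K) K ∘ y) 0 0)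
  | add a b _ _ ha hb =>
    rw [map_add]
    exact (NumberField.HeightOneSpectrum.adicAbv_add_le_max K v _ _).trans (max_le ha hb)
  | smul t a _ ha =>
    rw [smul_eq_mul, map_mul]
    exact (placeAbs_mul (.inl v) _ _).trans_le
      ((mul_le_of_le_one_left (placeAbs_nonneg (.inl v) _) (finAbs_algebraMap_le_one v t)).trans ha)

lemma weil_mk_mk_le_of_mem_crossIdeal {x y : Fin (n + 1) → 𝓞 K}
    (hx : algebraMap (𝓞 K) K ∘ x ≠ 0) (hy : algebraMap (𝓞 K) K ∘ y ≠ 0) {r : 𝓞 K}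
    (hr0 : r ≠ 0) (hr : r ∈ crossIdeal x y) :
    weil (.inl v) (Projectivization.mk K _ hx) (Projectivization.mk K _ hy) ≤
      -Real.log (finAbs v (algebraMap (𝓞 K) K r)) := by
  have hr_pos : 0 < finAbs v (algebraMap (𝓞 K) K r) :=
    placeAbs_pos (.inl v) ((map_ne_zero_iff _ (FaithfulSMul.algebraMap_injective _ K)).mpr hr0)
  have hδ := finAbs_le_projDelta_of_mem_crossIdeal v hr
  rw [weil_mk_mk, ← Real.log_inv, ← one_div]
  refine Real.log_le_log (div_pos (mul_pos (projNorm_pos _ hx) (projNorm_pos _ hy))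
    (hr_pos.trans_le hδ)) (div_le_div₀ zero_le_one ?_ hr_pos hδ)
  exact mul_le_one₀ (projNorm_algebraMap_le_one v x) (projNorm_pos _ hy).le
    (projNorm_algebraMap_le_one v y)

end FinitePlaces

theorem Projectivization.exists_integral_rep {R K : Type*} [CommRing R] [Field K] [Algebra R K]
    [IsFractionRing R K] {ι : Type*} [Finite ι] (d : Projectivization K (ι → K)) :
    ∃ (w : ι → R) (hw : algebraMap R K ∘ w ≠ 0), Projectivization.mk K _ hw = d := by
  obtain ⟨b, hb⟩ := IsLocalization.exist_integer_multiples_of_finite (nonZeroDivisors R) d.rep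
  choose w hw using hb
  have hwb : algebraMap R K ∘ w = algebraMap R K b • d.rep :=
    funext fun k => by simp [hw k, Algebra.smul_def]
  have hw0 : algebraMap R K ∘ w ≠ 0 := by
    rw [hwb]
    exact smul_ne_zero (IsLocalization.map_units K b).ne_zero d.rep_nonzero
  refine ⟨w, hw0, ?_⟩
  conv_rhs => rw [← d.mk_rep]
  exact (Projectivization.mk_eq_mk_iff' K _ _ hw0 _).mpr ⟨_, hwb.symm⟩

section Construction

variable {R : Type*} [CommRing R] {n : ℕ}

open Polynomial in
lemma exists_ne_zero_forall_mem_crossIdeal_cons_shear {w : Fin (n + 1) → R} (hw : w ≠ 0)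
    {G : R[X]} {γ : R} {i j : Fin n} (hij : i ≠ j)
    (hG : w 0 ≠ 0 → C (w 0) * X - C (w i.succ) ∣ G) (hγ : w 0 ≠ 0 → w 0 * γ - w j.succ ≠ 0) :
    ∃ ρ ≠ 0, ∀ σ, ρ ∈ crossIdeal w (Fin.cons 1 (shear G γ i j σ)) := by
  by_cases h0 : w 0 = 0
  · obtain ⟨k, hk⟩ := Function.ne_iff.mp hw
    cases k using Fin.cases with
    | zero => exact absurd h0 hk
    | succ k => exact ⟨w k.succ, hk, fun σ => mem_crossIdeal_cons_of_eq_zero _ _ h0 k⟩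
  · refine ⟨_, hγ h0, fun σ => mem_crossIdeal_cons_of_dvd _ _ (i := i) ?_⟩
    rw [shear_apply_of_ne hij, shear_apply_self, add_sub_cancel_right]
    exact Dvd.dvd.mul_left (by simpa using eval_dvd (x := σ i) (hG h0)) _

open Polynomial in
theorem exists_shear_forall_mem_crossIdeal [IsDomain R] [Infinite R]
    (W : Finset (Fin (n + 1) → R)) (hW : ∀ w ∈ W, w ≠ 0) {i j : Fin n} (hij : i ≠ j) :
    ∃ G : R[X], G ≠ 0 ∧ ∃ γ ρ : R, ρ ≠ 0 ∧
      ∀ w ∈ W, ∀ σ, ρ ∈ crossIdeal w (Fin.cons 1 (shear G γ i j σ)) := by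
  classical
  let L (k : Fin (n + 1)) : R[X] := ∏ w ∈ W with w 0 ≠ 0, (C (w 0) * X - C (w k))
  have hL (k : Fin (n + 1)) : L k ≠ 0 := Finset.prod_ne_zero_iff.mpr fun w hw h =>
    (Finset.mem_filter.mp hw).2 (by simpa using congrArg (coeff · 1) h)
  obtain ⟨γ, hγ⟩ : ∃ γ, ¬ (L j.succ).IsRoot γ :=
    (finite_setOfPred_isRoot (hL _)).infinite_compl.nonempty
  have hγ' (w) (hw : w ∈ W) (h0 : w 0 ≠ 0) : w 0 * γ - w j.succ ≠ 0 := by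
    simpa using Finset.prod_ne_zero_iff.mp (by simpa [L, eval_prod] using hγ) w
      (Finset.mem_filter.mpr ⟨hw, h0⟩)
  have hdvd (w) (hw : w ∈ W) (h0 : w 0 ≠ 0) : C (w 0) * X - C (w i.succ) ∣ L i.succ :=
    Finset.dvd_prod_of_mem _ (Finset.mem_filter.mpr ⟨hw, h0⟩)
  choose! ρ hρ0 hρ using fun w hw =>
    exists_ne_zero_forall_mem_crossIdeal_cons_shear (hW w hw) hij (hdvd w hw) (hγ' w hw)
  exact ⟨L i.succ, hL _, γ, ∏ w ∈ W, ρ w, Finset.prod_ne_zero_iff.mpr hρ0, fun w hw σ =>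
    Ideal.mem_of_dvd _ (Finset.dvd_prod_of_mem ρ hw) (hρ w hw σ)⟩

end Construction

theorem exists_integral_points_mem_crossIdeal {R K : Type*} [CommRing R] [IsDomain R]
    [Infinite R] [Field K] [Algebra R K] [IsFractionRing R K] {n : ℕ} (hn : 2 ≤ n)
    (N : Finset (Projectivization K (Fin (n + 1) → K))) :
    ∃ ρ : R, ρ ≠ 0 ∧ ∀ f : MvPolynomial (Fin (n + 1)) K, f ≠ 0 → ∀ e, f.IsHomogeneous e →
      ∃ A : Fin n → R, MvPolynomial.eval (Fin.cons 1 (algebraMap R K ∘ A)) f ≠ 0 ∧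
        ∀ d ∈ N, ∃ (w : Fin (n + 1) → R) (hw : algebraMap R K ∘ w ≠ 0),
          Projectivization.mk K _ hw = d ∧ ρ ∈ crossIdeal w (Fin.cons 1 A) := by
  classical
  obtain ⟨i, j, hij⟩ : ∃ i j : Fin n, i ≠ j := ⟨⟨0, by omega⟩, ⟨1, by omega⟩, by simp⟩
  choose w hw0 hw using Projectivization.exists_integral_rep (R := R) (K := K) (ι := Fin (n + 1))
  obtain ⟨G, hG, γ, ρ, hρ0, hρ⟩ := exists_shear_forall_mem_crossIdeal (N.image w)
    (by simpa using fun d _ h => hw0 d (by simp [h])) hij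
  refine ⟨ρ, hρ0, fun f hf e hfe => ?_⟩
  obtain ⟨σ, hσ⟩ := exists_eval_cons_algebraMap_shear_ne_zero hfe hf hG hij γ
  exact ⟨_, hσ, fun d hd => ⟨w d, hw0 d, hw d, hρ _ (Finset.mem_image_of_mem w hd) σ⟩⟩

/-- Let `k` be a number field, `n ≥ 2`, `N` a finite set of `k`-rational
points of `ℙⁿ`, and `S` a finite set of places of `k` containing all the infinite places.
Then there exist non-negative reals `n_v`, one for each place `v ∉ S`, with `n_v = 0` for
all but finitely many such places, such that the set of points `Q = [1 : a₁ : … : a_n]`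
of `ℙⁿ(k)` with `Q ∉ N` satisfying, for every place `v ∉ S`,
`max (1, |a₁|_v, …, |a_n|_v) ≤ exp n_v` and `λ_{d,v}(Q) ≤ n_v` for every `d ∈ N`, is
Zariski dense in `ℙⁿ`; i.e., for every nonzero homogeneous polynomial `f` there is a point
`Q` of the set with `f(Q) ≠ 0`. -/
theorem dense_S_integral_points_proj_space
    (K : Type) [Field K] [NumberField K] (n : ℕ) (hn : 2 ≤ n)
    (N : Finset (Projectivization K (Fin (n + 1) → K)))
    (S : Finset (Place K)) (hS : ∀ w : NumberField.InfinitePlace K, Sum.inr w ∈ S) :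
    ∃ c : Place K → ℝ, (∀ v ∉ S, 0 ≤ c v) ∧ {v : Place K | v ∉ S ∧ c v ≠ 0}.Finite ∧
      ∀ (f : MvPolynomial (Fin (n + 1)) K), f ≠ 0 → ∀ e : ℕ, f.IsHomogeneous e →
        ∃ (Q : Projectivization K (Fin (n + 1) → K)) (a : Fin n → K)
            (ha : (Fin.cons 1 a : Fin (n + 1) → K) ≠ 0),
          Projectivization.mk K (Fin.cons 1 a) ha = Q ∧ Q ∉ N ∧
          (∀ v : Place K, v ∉ S →
            max 1 (⨆ i, placeAbs v (a i)) ≤ Real.exp (c v) ∧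
            ∀ d ∈ N, weil v d Q ≤ c v) ∧
          MvPolynomial.eval Q.rep f ≠ 0 := by
  obtain ⟨ρ, hρ0, hρ⟩ := exists_integral_points_mem_crossIdeal (R := 𝓞 K) hn N
  let c : Place K → ℝ := Sum.elim (fun v => -Real.log (finAbs v (algebraMap (𝓞 K) K ρ))) 0
  have hc (v : FinPlace K) : 0 ≤ c (.inl v) :=
    neg_nonneg.mpr (Real.log_nonpos (placeAbs_nonneg (.inl v) _) (finAbs_algebraMap_le_one v ρ))
  refine ⟨c, ?_, ?_, fun f hf e hfe => ?_⟩
  · rintro (v | v) hv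
    · exact hc v
    · exact absurd (hS v) hv
  · refine ((finite_setOf_finAbs_algebraMap_ne_one hρ0).image Sum.inl).subset ?_
    rintro (v | v) ⟨hv, hcv⟩
    · exact ⟨v, fun h => hcv (by simp [c, h]), rfl⟩
    · exact absurd (hS v) hv
  obtain ⟨A, hA, hAN⟩ := hρ f hf e hfe
  have hq : algebraMap (𝓞 K) K ∘ Fin.cons 1 A = Fin.cons 1 (algebraMap (𝓞 K) K ∘ A) := by
    rw [Fin.comp_cons, map_one]
  have hq0 : algebraMap (𝓞 K) K ∘ Fin.cons 1 A ≠ 0 := Function.ne_iff.mpr ⟨0, by simp⟩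
  refine ⟨Projectivization.mk K _ hq0, _, hq ▸ hq0,
    (Projectivization.mk_eq_mk_iff' K _ _ _ _).mpr ⟨1, by rw [one_smul, hq]⟩, fun hQN => ?_,
    fun v hv => ?_, ?_⟩
  · obtain ⟨w, hw0, hwQ, hρw⟩ := hAN _ hQN
    rw [crossIdeal_eq_bot_of_mk_eq_mk hw0 hq0 hwQ, Ideal.mem_bot] at hρw
    exact hρ0 hρw
  · rcases v with v | v
    · have : Nonempty (Fin n) := ⟨⟨0, by omega⟩⟩
      refine ⟨max_le (Real.one_le_exp (hc v))
        ((ciSup_le fun k => finAbs_algebraMap_le_one v (A k)).trans (Real.one_le_exp (hc v))),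
        fun d hd => ?_⟩
      obtain ⟨w, hw0, rfl, hρw⟩ := hAN d hd
      exact weil_mk_mk_le_of_mem_crossIdeal v hw0 hq0 hρ0 hρw
    · exact absurd (hS v) hv
  · obtain ⟨u, hu⟩ := Projectivization.exists_smul_eq_mk_rep K _ hq0
    rw [← hu, Units.smul_def, hfe.eval_smul, hq]
    exact mul_ne_zero (pow_ne_zero _ u.ne_zero) hA
end
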